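/- Let φ: A → A' be a bijective unital multiplicative *-Lie-Jordan n-map between unital C*-algebras, and P₁ a nontrivial projection with P₂ = I - P₁. Then for i ≠ j and A_{ij}, B_{ij} ∈ P_i A P_j, φ(A_{ij} + B_{ij}) = φ(A_{ij}) + φ(B_{ij}). -/
import Mathlib

def lieStar {R : Type*} [NonUnitalRing R] [StarRing R] (x y : R) : R := x * y - y * star x
def jordanStar {R : Type*} [NonUnitalRing R] [StarRing R] (x y : R) : R := x * y + y * star x
def pStar {R : Type*} [NonUnitalRing R] [StarRing R] (x : R) (l : List R) : R := l.foldl lieStar x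
def qStar {R : Type*} [NonUnitalRing R] [StarRing R] (x : R) (l : List R) : R := l.foldl jordanStar x

section Helpers

set_option linter.unusedSectionVars false
variable {R : Type*} [Ring R] [StarRing R] [Module ℂ R] [IsScalarTower ℂ R R]
  [SMulCommClass ℂ R R] [StarModule ℂ R]

lemma qStar_cons (x c : R) (l : List R) : qStar x (c :: l) = qStar (jordanStar x c) l := rfl
lemma pStar_cons (x c : R) (l : List R) : pStar x (c :: l) = pStar (lieStar x c) l := rfl

lemma qStar_append (x : R) (l₁ l₂ : List R) : qStar x (l₁ ++ l₂) = qStar (qStar x l₁) l₂ := by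
  simp [qStar, List.foldl_append]

lemma jordanStar_add_left (x y c : R) : jordanStar (x + y) c = jordanStar x c + jordanStar y c := by
  simp only [jordanStar, add_mul, star_add, mul_add]; abel

lemma jordanStar_add_right (x c d : R) : jordanStar x (c + d) = jordanStar x c + jordanStar x d := by
  simp only [jordanStar, mul_add, add_mul]; abel

lemma lieStar_add_left (x y c : R) : lieStar (x + y) c = lieStar x c + lieStar y c := by
  simp only [lieStar, add_mul, star_add, mul_add]; abel

lemma qStar_add_head (l : List R) : ∀ x y : R, qStar (x + y) l = qStar x l + qStar y l := by
  induction l with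
  | nil => intro x y; rfl
  | cons c l ih =>
    intro x y
    rw [qStar_cons, qStar_cons, qStar_cons, jordanStar_add_left]
    exact ih _ _

lemma pStar_add_head (l : List R) : ∀ x y : R, pStar (x + y) l = pStar x l + pStar y l := by
  induction l with
  | nil => intro x y; rfl
  | cons c l ih =>
    intro x y
    rw [pStar_cons, pStar_cons, pStar_cons, lieStar_add_left]
    exact ih _ _

lemma qStar_rep_sa (k : ℕ) (z : R) (hz : star z = z) :
    qStar z (List.replicate k 1) = (2:ℂ)^k • z := by
  induction k generalizing z with
  | zero => simp [qStar]
  | succ k ih =>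
    rw [List.replicate_succ, qStar_cons]
    have h1 : jordanStar z 1 = (2:ℂ) • z := by
      simp only [jordanStar, mul_one, one_mul, hz, two_smul]
    rw [h1, ih ((2:ℂ) • z) (by rw [star_smul, hz]; simp)]
    rw [smul_smul, ← pow_succ]

lemma pStar_rep_skew (k : ℕ) (z : R) (hz : star z = -z) :
    pStar z (List.replicate k 1) = (2:ℂ)^k • z := by
  induction k generalizing z with
  | zero => simp [pStar]
  | succ k ih =>
    rw [List.replicate_succ, pStar_cons]
    have h1 : lieStar z 1 = (2:ℂ) • z := by
      simp only [lieStar, mul_one, one_mul, hz, sub_neg_eq_add, two_smul]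
    rw [h1, ih ((2:ℂ) • z) (by rw [star_smul, hz]; simp)]
    rw [smul_smul, ← pow_succ]

end Helpers

set_option maxHeartbeats 2000000 in
/-- φ(A_{ij} + B_{ij}) = φ(A_{ij}) + φ(B_{ij}) for i ≠ j. -/
theorem starLieJordanMap_add_same_off {A B : Type*} [NormedRing A] [StarRing A] [CStarRing A] [NormedAlgebra ℂ A] [CompleteSpace A] [StarModule ℂ A] [NormedRing B] [StarRing B] [CStarRing B] [NormedAlgebra ℂ B] [CompleteSpace B] [StarModule ℂ B]
    (n : ℕ) (hn : 2 ≤ n) (φ : A → B) (hbij : Function.Bijective φ) (hφ1 : φ 1 = 1)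
    (hp : ∀ (x : A) (l : List A), l.length = n - 1 → φ (pStar x l) = pStar (φ x) (l.map φ))
    (hq : ∀ (x : A) (l : List A), l.length = n - 1 → φ (qStar x l) = qStar (φ x) (l.map φ)) (P : A) (hPidem : P * P = P) (hPsa : star P = P) (hP0 : P ≠ 0) (hP1 : P ≠ 1)
    (Pi : A) (hi : Pi = P ∨ Pi = 1 - P)
    (a b : A) (ha : Pi * a * (1 - Pi) = a) (hb : Pi * b * (1 - Pi) = b) :
    φ (a + b) = φ a + φ b := by
  obtain ⟨hinj, hsurj⟩ := hbij
  -- basic projection facts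
  have hPiIdem : Pi * Pi = Pi := by
    rcases hi with h | h <;> subst h
    · exact hPidem
    · rw [mul_sub, mul_one, sub_mul, one_mul, hPidem, sub_self, sub_zero]
  have hPiStar : star Pi = Pi := by
    rcases hi with h | h <;> subst h
    · exact hPsa
    · rw [star_sub, star_one, hPsa]
  obtain ⟨Q, hQdef⟩ : ∃ Q : A, Q = 1 - Pi := ⟨_, rfl⟩
  rw [← hQdef] at ha hb
  have hQIdem : Q * Q = Q := by
    rw [hQdef, mul_sub, mul_one, sub_mul, one_mul, hPiIdem, sub_self, sub_zero]
  have hPQ : Pi * Q = 0 := by rw [hQdef, mul_sub, mul_one, hPiIdem, sub_self]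
  have hQP : Q * Pi = 0 := by rw [hQdef, sub_mul, one_mul, hPiIdem, sub_self]
  have hQStar : star Q = Q := by rw [hQdef, star_sub, star_one, hPiStar]
  have hPQsum : Pi + Q = 1 := by rw [hQdef]; abel
  -- cancellation helpers
  have hcB : ∀ (r : ℂ), r ≠ 0 → ∀ u v : B, r • u = r • v → u = v := by
    intro r hr u v h
    have h2 := congrArg (fun w => r⁻¹ • w) h
    simpa [smul_smul, inv_mul_cancel₀ hr] using h2
  have hcA : ∀ (r : ℂ), r ≠ 0 → ∀ u v : A, r • u = r • v → u = v := by
    intro r hr u v h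
    have h2 := congrArg (fun w => r⁻¹ • w) h
    simpa [smul_smul, inv_mul_cancel₀ hr] using h2
  have htwoB : ∀ u v : B, u + u = v + v → u = v := by
    intro u v h
    exact hcB 2 two_ne_zero u v (by rw [two_smul, two_smul]; exact h)
  have htwoA : ∀ u v : A, u + u = v + v → u = v := by
    intro u v h
    exact hcA 2 two_ne_zero u v (by rw [two_smul, two_smul]; exact h)
  have hc2 : ((2:ℂ)^(n-2)) ≠ 0 := pow_ne_zero _ two_ne_zero
  have distBa : ∀ (r : ℂ) (X Y : B), r • (X + Y) = r • X + r • Y := fun r X Y => smul_add r X Y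
  have distBs : ∀ (r : ℂ) (X Y : B), r • (X - Y) = r • X - r • Y := fun r X Y => smul_sub r X Y
  have distBn : ∀ (r : ℂ) (X : B), r • (-X) = -(r • X) := fun r X => smul_neg r X
  -- STEP 1 : all-ones identities
  have hJ1 : ∀ z : A, φ ((2:ℂ)^(n-2) • (z + star z)) = (2:ℂ)^(n-2) • (φ z + star (φ z)) := by
    intro z
    have hlen : (List.replicate (n-1) (1:A)).length = n - 1 := by simp
    have h := hq z _ hlen
    have hmap : (List.replicate (n-1) (1:A)).map φ = List.replicate (n-1) (1:B) := by
      simp [hφ1]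
    rw [hmap] at h
    have hrepA : List.replicate (n-1) (1:A) = 1 :: List.replicate (n-2) 1 := by
      rw [show n - 1 = (n-2) + 1 by omega, List.replicate_succ]
    have hrepB : List.replicate (n-1) (1:B) = 1 :: List.replicate (n-2) 1 := by
      rw [show n - 1 = (n-2) + 1 by omega, List.replicate_succ]
    rw [hrepA, hrepB, qStar_cons, qStar_cons] at h
    have hA : jordanStar z (1:A) = z + star z := by simp [jordanStar]
    have hB : jordanStar (φ z) (1:B) = φ z + star (φ z) := by simp [jordanStar]
    rw [hA, hB, qStar_rep_sa _ _ (by rw [star_add, star_star]; abel),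
      qStar_rep_sa _ _ (by rw [star_add, star_star]; abel)] at h
    exact h
  have hL1 : ∀ z : A, φ ((2:ℂ)^(n-2) • (z - star z)) = (2:ℂ)^(n-2) • (φ z - star (φ z)) := by
    intro z
    have hlen : (List.replicate (n-1) (1:A)).length = n - 1 := by simp
    have h := hp z _ hlen
    have hmap : (List.replicate (n-1) (1:A)).map φ = List.replicate (n-1) (1:B) := by
      simp [hφ1]
    rw [hmap] at h
    have hrepA : List.replicate (n-1) (1:A) = 1 :: List.replicate (n-2) 1 := by
      rw [show n - 1 = (n-2) + 1 by omega, List.replicate_succ]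
    have hrepB : List.replicate (n-1) (1:B) = 1 :: List.replicate (n-2) 1 := by
      rw [show n - 1 = (n-2) + 1 by omega, List.replicate_succ]
    rw [hrepA, hrepB, pStar_cons, pStar_cons] at h
    have hA : lieStar z (1:A) = z - star z := by simp [lieStar]
    have hB : lieStar (φ z) (1:B) = φ z - star (φ z) := by simp [lieStar]
    rw [hA, hB, pStar_rep_skew _ _ (by rw [star_sub, star_star]; abel),
      pStar_rep_skew _ _ (by rw [star_sub, star_star]; abel)] at h
    exact h
  -- φ 0 = 0
  have hφ0 : φ 0 = 0 := by
    have h1 := hJ1 0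
    have h2 := hL1 0
    simp only [star_zero, add_zero, sub_zero, smul_zero] at h1 h2
    -- h1 : φ 0 = c • (φ 0 + star (φ 0)), h2 : φ 0 = c • (φ 0 - star (φ 0))
    have h3 : (2:ℂ)^(n-2) • (φ 0 + star (φ 0)) = (2:ℂ)^(n-2) • (φ 0 - star (φ 0)) := by
      rw [← h1, ← h2]
    have h4 : φ 0 + star (φ 0) = φ 0 - star (φ 0) := hcB _ hc2 _ _ h3
    have h5 : star (φ 0) = 0 := by
      have : star (φ 0) + star (φ 0) = 0 + 0 := by
        have := sub_eq_zero_of_eq h4.symm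
        rw [zero_add]
        linear_combination (norm := abel) -this
      exact htwoB _ _ this
    have h6 : φ 0 = 0 := by
      have := congrArg star h5
      rwa [star_star, star_zero] at this
    exact h6

  -- corner fact bundles
  have c12 : ∀ z : A, Pi * z * Q = z →
      Pi * z = z ∧ z * Q = z ∧ z * Pi = 0 ∧ Q * z = 0 := by
    intro z hz
    have h1 : Pi * z = z := by
      conv_lhs => rw [← hz]
      rw [show Pi * (Pi * z * Q) = (Pi * Pi) * z * Q by noncomm_ring, hPiIdem, hz]
    have h2 : z * Q = z := by
      conv_lhs => rw [← hz]
      rw [show (Pi * z * Q) * Q = Pi * z * (Q * Q) by noncomm_ring, hQIdem, hz]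
    have h3 : z * Pi = 0 := by
      conv_lhs => rw [← hz]
      rw [show (Pi * z * Q) * Pi = Pi * z * (Q * Pi) by noncomm_ring, hQP, mul_zero]
    have h4 : Q * z = 0 := by
      conv_lhs => rw [← hz]
      rw [show Q * (Pi * z * Q) = (Q * Pi) * z * Q by noncomm_ring, hQP, zero_mul, zero_mul]
    exact ⟨h1, h2, h3, h4⟩
  have c21 : ∀ z : A, Q * z * Pi = z →
      Q * z = z ∧ z * Pi = z ∧ z * Q = 0 ∧ Pi * z = 0 := by
    intro z hz
    have h1 : Q * z = z := by
      conv_lhs => rw [← hz]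
      rw [show Q * (Q * z * Pi) = (Q * Q) * z * Pi by noncomm_ring, hQIdem, hz]
    have h2 : z * Pi = z := by
      conv_lhs => rw [← hz]
      rw [show (Q * z * Pi) * Pi = Q * z * (Pi * Pi) by noncomm_ring, hPiIdem, hz]
    have h3 : z * Q = 0 := by
      conv_lhs => rw [← hz]
      rw [show (Q * z * Pi) * Q = Q * z * (Pi * Q) by noncomm_ring, hPQ, mul_zero]
    have h4 : Pi * z = 0 := by
      conv_lhs => rw [← hz]
      rw [show Pi * (Q * z * Pi) = (Pi * Q) * z * Pi by noncomm_ring, hPQ, zero_mul, zero_mul]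
    exact ⟨h1, h2, h3, h4⟩
  have c11 : ∀ z : A, Pi * z * Pi = z →
      Pi * z = z ∧ z * Pi = z ∧ z * Q = 0 ∧ Q * z = 0 := by
    intro z hz
    have h1 : Pi * z = z := by
      conv_lhs => rw [← hz]
      rw [show Pi * (Pi * z * Pi) = (Pi * Pi) * z * Pi by noncomm_ring, hPiIdem, hz]
    have h2 : z * Pi = z := by
      conv_lhs => rw [← hz]
      rw [show (Pi * z * Pi) * Pi = Pi * z * (Pi * Pi) by noncomm_ring, hPiIdem, hz]
    have h3 : z * Q = 0 := by
      conv_lhs => rw [← hz]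
      rw [show (Pi * z * Pi) * Q = Pi * z * (Pi * Q) by noncomm_ring, hPQ, mul_zero]
    have h4 : Q * z = 0 := by
      conv_lhs => rw [← hz]
      rw [show Q * (Pi * z * Pi) = (Q * Pi) * z * Pi by noncomm_ring, hQP, zero_mul, zero_mul]
    exact ⟨h1, h2, h3, h4⟩
  have c22 : ∀ z : A, Q * z * Q = z →
      Q * z = z ∧ z * Q = z ∧ z * Pi = 0 ∧ Pi * z = 0 := by
    intro z hz
    have h1 : Q * z = z := by
      conv_lhs => rw [← hz]
      rw [show Q * (Q * z * Q) = (Q * Q) * z * Q by noncomm_ring, hQIdem, hz]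
    have h2 : z * Q = z := by
      conv_lhs => rw [← hz]
      rw [show (Q * z * Q) * Q = Q * z * (Q * Q) by noncomm_ring, hQIdem, hz]
    have h3 : z * Pi = 0 := by
      conv_lhs => rw [← hz]
      rw [show (Q * z * Q) * Pi = Q * z * (Q * Pi) by noncomm_ring, hQP, mul_zero]
    have h4 : Pi * z = 0 := by
      conv_lhs => rw [← hz]
      rw [show Pi * (Q * z * Q) = (Pi * Q) * z * Q by noncomm_ring, hPQ, zero_mul, zero_mul]
    exact ⟨h1, h2, h3, h4⟩
  -- star corner transfers
  have s12 : ∀ z : A, Pi * z * Q = z → Q * star z * Pi = star z := by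
    intro z hz
    have h := congrArg star hz
    rwa [star_mul, star_mul, hQStar, hPiStar, ← mul_assoc] at h
  have s21 : ∀ z : A, Q * z * Pi = z → Pi * star z * Q = star z := by
    intro z hz
    have h := congrArg star hz
    rwa [star_mul, star_mul, hQStar, hPiStar, ← mul_assoc] at h

  -- transport lemmas (head slot)
  have transq : ∀ l : List A, l.length = n - 1 → ∀ x y T : A, φ T = φ x + φ y →
      φ (qStar T l) = φ (qStar x l) + φ (qStar y l) := by
    intro l hl x y T hT
    rw [hq T l hl, hT, qStar_add_head, ← hq x l hl, ← hq y l hl]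
  have transp : ∀ l : List A, l.length = n - 1 → ∀ x y T : A, φ T = φ x + φ y →
      φ (pStar T l) = φ (pStar x l) + φ (pStar y l) := by
    intro l hl x y T hT
    rw [hp T l hl, hT, pStar_add_head, ← hp x l hl, ← hp y l hl]
  -- one-slot conversion (jordan)
  have convj : ∀ M : A, ∃ N : B, ∀ z : A,
      φ (M * z + z * star M) = N * (φ z) + (φ z) * star N := by
    intro M
    by_cases hn2 : n = 2
    · refine ⟨φ M, fun z => ?_⟩
      have h := hq M [z] (by simp [hn2])
      simpa [qStar, jordanStar] using h
    · have hn3 : 3 ≤ n := by omega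
      set u₀ : A := ((2:ℂ)^(n-2))⁻¹ • 1 with hu₀
      have hu₀sa : star u₀ = u₀ := by
        rw [hu₀, star_smul, star_one]
        congr 1
        simp
      have hcol : qStar u₀ (List.replicate (n-3) 1) = (2:ℂ)⁻¹ • (1:A) := by
        rw [qStar_rep_sa _ _ hu₀sa, hu₀, smul_smul]
        congr 1
        rw [show n - 2 = (n-3) + 1 by omega, pow_succ, mul_inv,
          ← mul_assoc, mul_inv_cancel₀ (pow_ne_zero _ two_ne_zero), one_mul]
      have hhalf : ∀ w : A, jordanStar ((2:ℂ)⁻¹ • (1:A)) w = w := by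
        intro w
        simp only [jordanStar, smul_mul_assoc, one_mul, star_smul, star_one, mul_smul_comm,
          mul_one]
        rw [show star ((2:ℂ)⁻¹) = (2:ℂ)⁻¹ by simp, ← add_smul]
        norm_num
      refine ⟨jordanStar (qStar (φ u₀) (List.replicate (n-3) 1)) (φ M), fun z => ?_⟩
      have hlen : (List.replicate (n-3) (1:A) ++ [M, z]).length = n - 1 := by
        simp; omega
      have h := hq u₀ _ hlen
      have hA : qStar u₀ (List.replicate (n-3) 1 ++ [M, z]) = M * z + z * star M := by
        rw [qStar_append, hcol]
        show qStar (jordanStar ((2:ℂ)⁻¹ • (1:A)) M) [z] = _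
        rw [hhalf M]
        show jordanStar M z = _
        rfl
      have hmap : (List.replicate (n-3) (1:A) ++ [M, z]).map φ
          = List.replicate (n-3) (1:B) ++ [φ M, φ z] := by
        simp [hφ1]
      rw [hA, hmap, qStar_append] at h
      exact h
  -- two-slot conversion (jordan)
  have conv2 : ∀ X₁ X₂ Y₁ Y₂ : A, φ (X₁ + X₂) = φ X₁ + φ X₂ → φ (Y₁ + Y₂) = φ Y₁ + φ Y₂ →
      φ (jordanStar (X₁ + X₂) (Y₁ + Y₂)) =
        φ (jordanStar X₁ Y₁) + φ (jordanStar X₁ Y₂) + φ (jordanStar X₂ Y₁) +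
          φ (jordanStar X₂ Y₂) := by
    intro X₁ X₂ Y₁ Y₂ hX hY
    by_cases hn2 : n = 2
    · have key : ∀ u v : A, φ (jordanStar u v) = jordanStar (φ u) (φ v) := by
        intro u v
        have h := hq u [v] (by simp [hn2])
        simpa [qStar] using h
      rw [key, hX, hY, jordanStar_add_left, jordanStar_add_right, jordanStar_add_right,
        ← key, ← key, ← key, ← key]
      abel
    · have hn3 : 3 ≤ n := by omega
      set u₀ : A := ((2:ℂ)^(n-2))⁻¹ • 1 with hu₀
      have hu₀sa : star u₀ = u₀ := by
        rw [hu₀, star_smul, star_one]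
        congr 1
        simp
      have hcol : qStar u₀ (List.replicate (n-3) 1) = (2:ℂ)⁻¹ • (1:A) := by
        rw [qStar_rep_sa _ _ hu₀sa, hu₀, smul_smul]
        congr 1
        rw [show n - 2 = (n-3) + 1 by omega, pow_succ, mul_inv,
          ← mul_assoc, mul_inv_cancel₀ (pow_ne_zero _ two_ne_zero), one_mul]
      have hhalf : ∀ w : A, jordanStar ((2:ℂ)⁻¹ • (1:A)) w = w := by
        intro w
        simp only [jordanStar, smul_mul_assoc, one_mul, star_smul, star_one, mul_smul_comm,
          mul_one]
        rw [show star ((2:ℂ)⁻¹) = (2:ℂ)⁻¹ by simp, ← add_smul]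
        norm_num
      have key : ∀ u v : A, φ (jordanStar u v)
          = jordanStar (jordanStar (qStar (φ u₀) (List.replicate (n-3) 1)) (φ u)) (φ v) := by
        intro u v
        have hlen : (List.replicate (n-3) (1:A) ++ [u, v]).length = n - 1 := by
          simp; omega
        have h := hq u₀ _ hlen
        have hA : qStar u₀ (List.replicate (n-3) 1 ++ [u, v]) = jordanStar u v := by
          rw [qStar_append, hcol]
          show qStar (jordanStar ((2:ℂ)⁻¹ • (1:A)) u) [v] = _
          rw [hhalf u]
          rfl
        have hmap : (List.replicate (n-3) (1:A) ++ [u, v]).map φ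
            = List.replicate (n-3) (1:B) ++ [φ u, φ v] := by
          simp [hφ1]
        rw [hA, hmap, qStar_append] at h
        exact h
      rw [key, hX, hY, jordanStar_add_right, jordanStar_add_right, jordanStar_add_left,
        jordanStar_add_left, ← key, ← key, ← key, ← key]
      abel

  -- Claim D : 12 + 21 additivity
  have claimD : ∀ x y : A, Pi * x * Q = x → Q * y * Pi = y → φ (x + y) = φ x + φ y := by
    intro x y hx hy
    obtain ⟨hx1, hx2, hx3, hx4⟩ := c12 x hx
    obtain ⟨hy1, hy2, hy3, hy4⟩ := c21 y hy
    obtain ⟨hxs1, hxs2, hxs3, hxs4⟩ := c21 (star x) (s12 x hx)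
    obtain ⟨hys1, hys2, hys3, hys4⟩ := c12 (star y) (s21 y hy)
    obtain ⟨T, hT⟩ := hsurj (φ x + φ y)
    have lenQ : ((Q :: List.replicate (n-2) 1 : List A)).length = n - 1 := by
      simp; omega
    have lenP : ((Pi :: List.replicate (n-2) 1 : List A)).length = n - 1 := by
      simp; omega
    have hrep0 : qStar (0:A) (List.replicate (n-2) 1) = 0 := by
      rw [qStar_rep_sa _ _ (star_zero A), smul_zero]
    have hrep0p : pStar (0:A) (List.replicate (n-2) 1) = 0 := by
      rw [pStar_rep_skew _ _ (by rw [star_zero, neg_zero]), smul_zero]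
    -- jordan context with Q
    have e1 : T * Q + Q * star T = x + star x := by
      apply hcA _ hc2
      apply hinj
      have h := transq _ lenQ x y T hT
      rw [qStar_cons, qStar_cons, qStar_cons] at h
      rw [show jordanStar x Q = x + star x by
          simp only [jordanStar]; rw [hx2, hxs1]] at h
      rw [show jordanStar y Q = 0 by
          simp only [jordanStar]; rw [hy3, hys4, add_zero]] at h
      rw [show jordanStar T Q = T * Q + Q * star T by simp only [jordanStar, hQStar]] at h
      rw [hrep0, hφ0, add_zero] at h
      rw [qStar_rep_sa (n-2) (x + star x) (by rw [star_add, star_star]; abel),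
        qStar_rep_sa (n-2) (T * Q + Q * star T) (by
          rw [star_add, star_mul, star_mul, star_star, hQStar]; abel)] at h
      exact h
    have e2 : T * Q - Q * star T = x - star x := by
      apply hcA _ hc2
      apply hinj
      have h := transp _ lenQ x y T hT
      rw [pStar_cons, pStar_cons, pStar_cons] at h
      rw [show lieStar x Q = x - star x by
          simp only [lieStar]; rw [hx2, hxs1]] at h
      rw [show lieStar y Q = 0 by
          simp only [lieStar]; rw [hy3, hys4, sub_zero]] at h
      rw [show lieStar T Q = T * Q - Q * star T by simp only [lieStar, hQStar]] at h
      rw [hrep0p, hφ0, add_zero] at h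
      rw [pStar_rep_skew (n-2) (x - star x) (by rw [star_sub, star_star]; abel),
        pStar_rep_skew (n-2) (T * Q - Q * star T) (by
          rw [star_sub, star_mul, star_mul, star_star, hQStar]; abel)] at h
      exact h
    have hTQ : T * Q = x := htwoA _ _ (by linear_combination (norm := abel) e1 + e2)
    -- jordan context with Pi
    have f1 : T * Pi + Pi * star T = y + star y := by
      apply hcA _ hc2
      apply hinj
      have h := transq _ lenP x y T hT
      rw [qStar_cons, qStar_cons, qStar_cons] at h
      rw [show jordanStar x Pi = 0 by
          simp only [jordanStar]; rw [hx3, hxs4, add_zero]] at h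
      rw [show jordanStar y Pi = y + star y by
          simp only [jordanStar]; rw [hy2, hys1]] at h
      rw [show jordanStar T Pi = T * Pi + Pi * star T by simp only [jordanStar, hPiStar]] at h
      rw [hrep0, hφ0, zero_add] at h
      rw [qStar_rep_sa (n-2) (y + star y) (by rw [star_add, star_star]; abel),
        qStar_rep_sa (n-2) (T * Pi + Pi * star T) (by
          rw [star_add, star_mul, star_mul, star_star, hPiStar]; abel)] at h
      exact h
    have f2 : T * Pi - Pi * star T = y - star y := by
      apply hcA _ hc2
      apply hinj
      have h := transp _ lenP x y T hT
      rw [pStar_cons, pStar_cons, pStar_cons] at h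
      rw [show lieStar x Pi = 0 by
          simp only [lieStar]; rw [hx3, hxs4, sub_zero]] at h
      rw [show lieStar y Pi = y - star y by
          simp only [lieStar]; rw [hy2, hys1]] at h
      rw [show lieStar T Pi = T * Pi - Pi * star T by simp only [lieStar, hPiStar]] at h
      rw [hrep0p, hφ0, zero_add] at h
      rw [pStar_rep_skew (n-2) (y - star y) (by rw [star_sub, star_star]; abel),
        pStar_rep_skew (n-2) (T * Pi - Pi * star T) (by
          rw [star_sub, star_mul, star_mul, star_star, hPiStar]; abel)] at h
      exact h
    have hTP : T * Pi = y := htwoA _ _ (by linear_combination (norm := abel) f1 + f2)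
    have hTeq : T = x + y := by
      have h1 : T * (Pi + Q) = T := by rw [hPQsum, mul_one]
      rw [mul_add, hTP, hTQ] at h1
      rw [← h1]; abel
    rw [← hTeq]; exact hT

  -- Claim A : 11 + 12 additivity
  have claimA : ∀ g x : A, Pi * g * Pi = g → Pi * x * Q = x → φ (g + x) = φ g + φ x := by
    intro g x hg hx
    obtain ⟨hg1, hg2, hg3, hg4⟩ := c11 g hg
    obtain ⟨hx1, hx2, hx3, hx4⟩ := c12 x hx
    have hgs : Pi * star g * Pi = star g := by
      have h := congrArg star hg
      rwa [star_mul, star_mul, hPiStar, ← mul_assoc] at h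
    obtain ⟨hgs1, hgs2, hgs3, hgs4⟩ := c11 (star g) hgs
    obtain ⟨hxs1, hxs2, hxs3, hxs4⟩ := c21 (star x) (s12 x hx)
    obtain ⟨T, hT⟩ := hsurj (φ g + φ x)
    -- (i) conv with Q
    obtain ⟨N, hN⟩ := convj Q
    have e1 : Q * T + T * Q = x := by
      apply hinj
      have h1 := hN T
      have h2 := hN g
      have h3 := hN x
      rw [hQStar] at h1 h2 h3
      rw [hT] at h1
      rw [show Q * g + g * Q = 0 by rw [hg4, hg3, add_zero]] at h2
      rw [show Q * x + x * Q = x by rw [hx4, hx2, zero_add]] at h3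
      rw [h1, mul_add, add_mul]
      calc N * φ g + N * φ x + (φ g * star N + φ x * star N)
          = (N * φ g + φ g * star N) + (N * φ x + φ x * star N) := by abel
        _ = φ 0 + φ x := by rw [← h2, ← h3]
        _ = φ x := by rw [hφ0, zero_add]
    -- (ii) conv with I • Q
    obtain ⟨N', hN'⟩ := convj (Complex.I • Q)
    have hargQ : ∀ z : A, (Complex.I • Q) * z + z * star (Complex.I • Q)
        = Complex.I • (Q * z - z * Q) := by
      intro z
      rw [star_smul, hQStar, Complex.star_def, Complex.conj_I, smul_mul_assoc,
        mul_smul_comm, neg_smul, smul_sub, sub_eq_add_neg]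
    have e2 : Q * T - T * Q = -x := by
      apply hcA Complex.I Complex.I_ne_zero
      apply hinj
      have h1 := hN' T
      have h2 := hN' g
      have h3 := hN' x
      rw [hargQ] at h1 h2 h3
      rw [hT] at h1
      rw [show Q * g - g * Q = 0 by rw [hg4, hg3, sub_zero]] at h2
      rw [show Q * x - x * Q = -x by rw [hx4, hx2, zero_sub]] at h3
      rw [smul_zero] at h2
      rw [h1, mul_add, add_mul]
      calc N' * φ g + N' * φ x + (φ g * star N' + φ x * star N')
          = (N' * φ g + φ g * star N') + (N' * φ x + φ x * star N') := by abel
        _ = φ 0 + φ (Complex.I • -x) := by rw [← h2, ← h3]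
        _ = φ (Complex.I • -x) := by rw [hφ0, zero_add]
    have hQT : Q * T = 0 := by
      have h := htwoA (Q * T) 0 (by linear_combination (norm := abel) e1 + e2)
      exact h
    have hTQ : T * Q = x := by
      rw [hQT, zero_add] at e1
      exact e1
    -- (iii) head context with Pi
    have lenP : ((Pi :: List.replicate (n-2) 1 : List A)).length = n - 1 := by
      simp; omega
    have hrep0 : qStar (0:A) (List.replicate (n-2) 1) = 0 := by
      rw [qStar_rep_sa _ _ (star_zero A), smul_zero]
    have hrep0p : pStar (0:A) (List.replicate (n-2) 1) = 0 := by
      rw [pStar_rep_skew _ _ (by rw [star_zero, neg_zero]), smul_zero]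
    have f1 : T * Pi + Pi * star T = g + star g := by
      apply hcA _ hc2
      apply hinj
      have h := transq _ lenP g x T hT
      rw [qStar_cons, qStar_cons, qStar_cons] at h
      rw [show jordanStar g Pi = g + star g by
          simp only [jordanStar]; rw [hg2, hgs1]] at h
      rw [show jordanStar x Pi = 0 by
          simp only [jordanStar]; rw [hx3, hxs4, add_zero]] at h
      rw [show jordanStar T Pi = T * Pi + Pi * star T by simp only [jordanStar, hPiStar]] at h
      rw [hrep0, hφ0, add_zero] at h
      rw [qStar_rep_sa (n-2) (g + star g) (by rw [star_add, star_star]; abel),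
        qStar_rep_sa (n-2) (T * Pi + Pi * star T) (by
          rw [star_add, star_mul, star_mul, star_star, hPiStar]; abel)] at h
      exact h
    have f2 : T * Pi - Pi * star T = g - star g := by
      apply hcA _ hc2
      apply hinj
      have h := transp _ lenP g x T hT
      rw [pStar_cons, pStar_cons, pStar_cons] at h
      rw [show lieStar g Pi = g - star g by
          simp only [lieStar]; rw [hg2, hgs1]] at h
      rw [show lieStar x Pi = 0 by
          simp only [lieStar]; rw [hx3, hxs4, sub_zero]] at h
      rw [show lieStar T Pi = T * Pi - Pi * star T by simp only [lieStar, hPiStar]] at h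
      rw [hrep0p, hφ0, add_zero] at h
      rw [pStar_rep_skew (n-2) (g - star g) (by rw [star_sub, star_star]; abel),
        pStar_rep_skew (n-2) (T * Pi - Pi * star T) (by
          rw [star_sub, star_mul, star_mul, star_star, hPiStar]; abel)] at h
      exact h
    have hTP : T * Pi = g := htwoA _ _ (by linear_combination (norm := abel) f1 + f2)
    have hTeq : T = g + x := by
      have h1 : T * (Pi + Q) = T := by rw [hPQsum, mul_one]
      rw [mul_add, hTP, hTQ] at h1
      rw [← h1]
    rw [← hTeq]; exact hT

  -- Claim A'' : 22 + 21 additivity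
  have claimA2 : ∀ w y : A, Q * w * Q = w → Q * y * Pi = y → φ (w + y) = φ w + φ y := by
    intro w y hw hy
    obtain ⟨hw1, hw2, hw3, hw4⟩ := c22 w hw
    obtain ⟨hy1, hy2, hy3, hy4⟩ := c21 y hy
    have hws : Q * star w * Q = star w := by
      have h := congrArg star hw
      rwa [star_mul, star_mul, hQStar, ← mul_assoc] at h
    obtain ⟨hws1, hws2, hws3, hws4⟩ := c22 (star w) hws
    obtain ⟨hys1, hys2, hys3, hys4⟩ := c12 (star y) (s21 y hy)
    obtain ⟨T, hT⟩ := hsurj (φ w + φ y)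
    -- (i) conv with Pi
    obtain ⟨N, hN⟩ := convj Pi
    have e1 : Pi * T + T * Pi = y := by
      apply hinj
      have h1 := hN T
      have h2 := hN w
      have h3 := hN y
      rw [hPiStar] at h1 h2 h3
      rw [hT] at h1
      rw [show Pi * w + w * Pi = 0 by rw [hw4, hw3, add_zero]] at h2
      rw [show Pi * y + y * Pi = y by rw [hy4, hy2, zero_add]] at h3
      rw [h1, mul_add, add_mul]
      calc N * φ w + N * φ y + (φ w * star N + φ y * star N)
          = (N * φ w + φ w * star N) + (N * φ y + φ y * star N) := by abel
        _ = φ 0 + φ y := by rw [← h2, ← h3]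
        _ = φ y := by rw [hφ0, zero_add]
    -- (ii) conv with I • Pi
    obtain ⟨N', hN'⟩ := convj (Complex.I • Pi)
    have hargP : ∀ z : A, (Complex.I • Pi) * z + z * star (Complex.I • Pi)
        = Complex.I • (Pi * z - z * Pi) := by
      intro z
      rw [star_smul, hPiStar, Complex.star_def, Complex.conj_I, smul_mul_assoc,
        mul_smul_comm, neg_smul, smul_sub, sub_eq_add_neg]
    have e2 : Pi * T - T * Pi = -y := by
      apply hcA Complex.I Complex.I_ne_zero
      apply hinj
      have h1 := hN' T
      have h2 := hN' w
      have h3 := hN' y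
      rw [hargP] at h1 h2 h3
      rw [hT] at h1
      rw [show Pi * w - w * Pi = 0 by rw [hw4, hw3, sub_zero]] at h2
      rw [show Pi * y - y * Pi = -y by rw [hy4, hy2, zero_sub]] at h3
      rw [smul_zero] at h2
      rw [h1, mul_add, add_mul]
      calc N' * φ w + N' * φ y + (φ w * star N' + φ y * star N')
          = (N' * φ w + φ w * star N') + (N' * φ y + φ y * star N') := by abel
        _ = φ 0 + φ (Complex.I • -y) := by rw [← h2, ← h3]
        _ = φ (Complex.I • -y) := by rw [hφ0, zero_add]
    have hPT : Pi * T = 0 := htwoA (Pi * T) 0 (by linear_combination (norm := abel) e1 + e2)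
    have hTP : T * Pi = y := by
      rw [hPT, zero_add] at e1
      exact e1
    -- (iii) head context with Q
    have lenQ : ((Q :: List.replicate (n-2) 1 : List A)).length = n - 1 := by
      simp; omega
    have hrep0 : qStar (0:A) (List.replicate (n-2) 1) = 0 := by
      rw [qStar_rep_sa _ _ (star_zero A), smul_zero]
    have hrep0p : pStar (0:A) (List.replicate (n-2) 1) = 0 := by
      rw [pStar_rep_skew _ _ (by rw [star_zero, neg_zero]), smul_zero]
    have f1 : T * Q + Q * star T = w + star w := by
      apply hcA _ hc2
      apply hinj
      have h := transq _ lenQ w y T hT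
      rw [qStar_cons, qStar_cons, qStar_cons] at h
      rw [show jordanStar w Q = w + star w by
          simp only [jordanStar]; rw [hw2, hws1]] at h
      rw [show jordanStar y Q = 0 by
          simp only [jordanStar]; rw [hy3, hys4, add_zero]] at h
      rw [show jordanStar T Q = T * Q + Q * star T by simp only [jordanStar, hQStar]] at h
      rw [hrep0, hφ0, add_zero] at h
      rw [qStar_rep_sa (n-2) (w + star w) (by rw [star_add, star_star]; abel),
        qStar_rep_sa (n-2) (T * Q + Q * star T) (by
          rw [star_add, star_mul, star_mul, star_star, hQStar]; abel)] at h
      exact h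
    have f2 : T * Q - Q * star T = w - star w := by
      apply hcA _ hc2
      apply hinj
      have h := transp _ lenQ w y T hT
      rw [pStar_cons, pStar_cons, pStar_cons] at h
      rw [show lieStar w Q = w - star w by
          simp only [lieStar]; rw [hw2, hws1]] at h
      rw [show lieStar y Q = 0 by
          simp only [lieStar]; rw [hy3, hys4, sub_zero]] at h
      rw [show lieStar T Q = T * Q - Q * star T by simp only [lieStar, hQStar]] at h
      rw [hrep0p, hφ0, add_zero] at h
      rw [pStar_rep_skew (n-2) (w - star w) (by rw [star_sub, star_star]; abel),
        pStar_rep_skew (n-2) (T * Q - Q * star T) (by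
          rw [star_sub, star_mul, star_mul, star_star, hQStar]; abel)] at h
      exact h
    have hTQ : T * Q = w := htwoA _ _ (by linear_combination (norm := abel) f1 + f2)
    have hTeq : T = w + y := by
      have h1 : T * (Pi + Q) = T := by rw [hPQsum, mul_one]
      rw [mul_add, hTP, hTQ] at h1
      rw [← h1]; abel
    rw [← hTeq]; exact hT

  have hP3 : Pi * Pi * Pi = Pi := by rw [hPiIdem, hPiIdem]
  have hQ3 : Q * Q * Q = Q := by rw [hQIdem, hQIdem]
  -- negation on the 21 corner
  have neg21 : ∀ y : A, Q * y * Pi = y → φ (-y) = -(φ y) := by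
    intro y hy
    obtain ⟨hy1, hy2, hy3, hy4⟩ := c21 y hy
    set b : A := star y with hbdef
    have hbc : Pi * b * Q = b := s21 y hy
    obtain ⟨hb1, hb2, hb3, hb4⟩ := c12 b hbc
    have hstarb : star b = y := by rw [hbdef, star_star]
    have hnyc : Q * (-y) * Pi = -y := by rw [mul_neg, neg_mul, hy]
    have hX : φ (Pi + b) = φ Pi + φ b := claimA Pi b hP3 hbc
    have hY : φ (Q + -y) = φ Q + φ (-y) := claimA2 Q (-y) hQ3 hnyc
    have yy0 : y * y = 0 := by
      calc y * y = y * Pi * y := by rw [hy2]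
        _ = y * (Pi * y) := by rw [mul_assoc]
        _ = 0 := by rw [hy4, mul_zero]
    have v1 : jordanStar Pi Q = 0 := by
      simp only [jordanStar, hPiStar]
      rw [hPQ, hQP, add_zero]
    have v2 : jordanStar Pi (-y) = -y := by
      simp only [jordanStar, hPiStar, mul_neg, neg_mul]
      rw [hy4, hy2, neg_zero, zero_add]
    have v3 : jordanStar b Q = b + y := by
      simp only [jordanStar, hstarb]
      rw [hb2, hy1]
    have v4 : jordanStar b (-y) = -(b * y) := by
      simp only [jordanStar, hstarb, mul_neg, neg_mul]
      rw [yy0, neg_zero, add_zero]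
    have vtot : jordanStar (Pi + b) (Q + -y) = -(b * y) + b := by
      rw [jordanStar_add_right, jordanStar_add_left, jordanStar_add_left, v1, v2, v3, v4]
      abel
    have hbyc : Pi * (b * y) * Pi = b * y := by
      rw [show Pi * (b * y) * Pi = (Pi * b) * (y * Pi) by noncomm_ring, hb1, hy2]
    have hbyn : Pi * (-(b * y)) * Pi = -(b * y) := by rw [mul_neg, neg_mul, hbyc]
    have E := conv2 Pi b Q (-y) hX hY
    rw [vtot, v1, v2, v3, v4, hφ0, zero_add] at E
    rw [claimA (-(b * y)) b hbyn hbc, claimD b y hbc hy] at E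
    have h0 : φ (-y) + φ y = 0 := by linear_combination (norm := abel) -E
    exact eq_neg_of_add_eq_zero_left h0
  -- negation on the 12 corner
  have neg12 : ∀ x : A, Pi * x * Q = x → φ (-x) = -(φ x) := by
    intro x hx
    obtain ⟨hx1, hx2, hx3, hx4⟩ := c12 x hx
    set y : A := star x with hydef
    have hyc : Q * y * Pi = y := s12 x hx
    obtain ⟨hy1, hy2, hy3, hy4⟩ := c21 y hyc
    have hstary : star y = x := by rw [hydef, star_star]
    have hnxc : Pi * (-x) * Q = -x := by rw [mul_neg, neg_mul, hx]
    have hX : φ (Q + y) = φ Q + φ y := claimA2 Q y hQ3 hyc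
    have hY : φ (Pi + -x) = φ Pi + φ (-x) := claimA Pi (-x) hP3 hnxc
    have xx0 : x * x = 0 := by
      calc x * x = x * Q * x := by rw [hx2]
        _ = x * (Q * x) := by rw [mul_assoc]
        _ = 0 := by rw [hx4, mul_zero]
    have v1 : jordanStar Q Pi = 0 := by
      simp only [jordanStar, hQStar]
      rw [hQP, hPQ, add_zero]
    have v2 : jordanStar Q (-x) = -x := by
      simp only [jordanStar, hQStar, mul_neg, neg_mul]
      rw [hx4, hx2, neg_zero, zero_add]
    have v3 : jordanStar y Pi = y + x := by
      simp only [jordanStar, hstary]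
      rw [hy2, hx1]
    have v4 : jordanStar y (-x) = -(y * x) := by
      simp only [jordanStar, hstary, mul_neg, neg_mul]
      rw [xx0, neg_zero, add_zero]
    have vtot : jordanStar (Q + y) (Pi + -x) = -(y * x) + y := by
      rw [jordanStar_add_right, jordanStar_add_left, jordanStar_add_left, v1, v2, v3, v4]
      abel
    have hyxc : Q * (y * x) * Q = y * x := by
      rw [show Q * (y * x) * Q = (Q * y) * (x * Q) by noncomm_ring, hy1, hx2]
    have hyxn : Q * (-(y * x)) * Q = -(y * x) := by rw [mul_neg, neg_mul, hyxc]
    have E := conv2 Q y Pi (-x) hX hY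
    rw [vtot, v1, v2, v3, v4, hφ0, zero_add] at E
    rw [show y + x = x + y from add_comm y x, claimA2 (-(y * x)) y hyxn hyc,
      claimD x y hx hyc] at E
    have h0 : φ (-x) + φ x = 0 := by linear_combination (norm := abel) -E
    exact eq_neg_of_add_eq_zero_left h0

  -- scaling and star-preservation
  set c : ℂ := (2:ℂ)^(n-2) with hcdef
  have SC12 : ∀ z : A, Pi * z * Q = z →
      φ (c • z) = c • φ z ∧ φ (c • star z) = c • star (φ z) := by
    intro z hz
    have hzc : Pi * (c • z) * Q = c • z := by rw [mul_smul_comm, smul_mul_assoc, hz]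
    have hzsc : Q * (c • star z) * Pi = c • star z := by
      rw [mul_smul_comm, smul_mul_assoc, s12 z hz]
    have hnsc : Q * (-(c • star z)) * Pi = -(c • star z) := by rw [mul_neg, neg_mul, hzsc]
    have hJ := hJ1 z
    rw [smul_add, claimD (c • z) (c • star z) hzc hzsc] at hJ
    rw [smul_add] at hJ
    have hL := hL1 z
    rw [smul_sub, sub_eq_add_neg (c • z) (c • star z),
      claimD (c • z) (-(c • star z)) hzc hnsc, neg21 (c • star z) hzsc] at hL
    rw [smul_sub] at hL
    constructor
    · exact htwoB _ _ (by linear_combination (norm := abel) hJ + hL)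
    · exact htwoB _ _ (by linear_combination (norm := abel) hJ - hL)
  have SC21 : ∀ w : A, Q * w * Pi = w →
      φ (c • w) = c • φ w ∧ φ (c • star w) = c • star (φ w) := by
    intro w hw
    have hwc : Q * (c • w) * Pi = c • w := by rw [mul_smul_comm, smul_mul_assoc, hw]
    have hwsc : Pi * (c • star w) * Q = c • star w := by
      rw [mul_smul_comm, smul_mul_assoc, s21 w hw]
    have hnsc : Pi * (-(c • star w)) * Q = -(c • star w) := by rw [mul_neg, neg_mul, hwsc]
    have hJ := hJ1 w
    rw [smul_add, show c • w + c • star w = c • star w + c • w from add_comm _ _,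
      claimD (c • star w) (c • w) hwsc hwc] at hJ
    rw [smul_add] at hJ
    have hL := hL1 w
    rw [smul_sub, show c • w - c • star w = -(c • star w) + c • w by abel,
      claimD (-(c • star w)) (c • w) hnsc hwc, neg12 (c • star w) hwsc] at hL
    rw [smul_sub] at hL
    constructor
    · exact htwoB _ _ (by linear_combination (norm := abel) hJ + hL)
    · exact htwoB _ _ (by linear_combination (norm := abel) hJ - hL)
  have SP12 : ∀ z : A, Pi * z * Q = z → star (φ z) = φ (star z) := by
    intro z hz
    have h1 := (SC12 z hz).2
    have h2 := (SC21 (star z) (s12 z hz)).1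
    exact hcB c hc2 _ _ (h1.symm.trans h2)
  have SP21 : ∀ w : A, Q * w * Pi = w → star (φ w) = φ (star w) := by
    intro w hw
    have h1 := (SC21 w hw).2
    have h2 := (SC12 (star w) (s21 w hw)).1
    exact hcB c hc2 _ _ (h1.symm.trans h2)
  -- subtraction rule on the 12 corner
  have subrule : ∀ u v : A, Pi * u * Q = u → Pi * v * Q = v →
      φ (c • (u - v)) = c • φ u - c • φ v := by
    intro u v hu hv
    have huv : Pi * (u - v) * Q = u - v := by rw [mul_sub, sub_mul, hu, hv]
    have huvc : Pi * (c • (u - v)) * Q = c • (u - v) := by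
      rw [mul_smul_comm, smul_mul_assoc, huv]
    have hsuv : Q * (star u - star v) * Pi = star u - star v := by
      rw [mul_sub, sub_mul, s12 u hu, s12 v hv]
    have hsuvc : Q * (c • (star u - star v)) * Pi = c • (star u - star v) := by
      rw [mul_smul_comm, smul_mul_assoc, hsuv]
    have hsvu : Q * (star v - star u) * Pi = star v - star u := by
      rw [mul_sub, sub_mul, s12 u hu, s12 v hv]
    have hsvuc : Q * (c • (star v - star u)) * Pi = c • (star v - star u) := by
      rw [mul_smul_comm, smul_mul_assoc, hsvu]
    have hnsv : Q * (-(star v)) * Pi = -(star v) := by rw [mul_neg, neg_mul, s12 v hv]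
    have hE2 := hJ1 (u - star v)
    rw [show (u - star v) + star (u - star v) = (u - v) + (star u - star v) by
        rw [star_sub, star_star]; abel] at hE2
    rw [smul_add, claimD (c • (u - v)) (c • (star u - star v)) huvc hsuvc] at hE2
    rw [show u - star v = u + -(star v) from sub_eq_add_neg u (star v),
      claimD u (-(star v)) hu hnsv, neg21 (star v) (s12 v hv)] at hE2
    rw [star_add, star_neg, SP12 u hu, SP21 (star v) (s12 v hv), star_star] at hE2
    simp only [distBa, distBn] at hE2
    have hE3 := hL1 (u + star v)
    rw [show (u + star v) - star (u + star v) = (u - v) + (star v - star u) by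
        rw [star_add, star_star]; abel] at hE3
    rw [smul_add, claimD (c • (u - v)) (c • (star v - star u)) huvc hsvuc] at hE3
    rw [show c • (star v - star u) = -(c • (star u - star v)) by rw [← smul_neg, neg_sub],
      neg21 (c • (star u - star v)) hsuvc] at hE3
    rw [claimD u (star v) hu (s12 v hv)] at hE3
    rw [star_add, SP12 u hu, SP21 (star v) (s12 v hv), star_star] at hE3
    simp only [distBa, distBs, distBn] at hE3
    exact htwoB _ _ (by linear_combination (norm := abel) hE2 + hE3)
  -- final assembly
  have hnb : Pi * (-b) * Q = -b := by rw [mul_neg, neg_mul, hb]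
  have hsub := subrule a (-b) ha hnb
  rw [sub_neg_eq_add, neg12 b hb, smul_neg, sub_neg_eq_add] at hsub
  have habc : Pi * (a + b) * Q = a + b := by rw [mul_add, add_mul, ha, hb]
  have h1 := (SC12 (a + b) habc).1
  apply hcB c hc2
  rw [← h1, hsub, smul_add]
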